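/- Let V be a finite set, k ≥ 1, and let each v ∈ V be assigned a value a(v) ≥ 1. Let V₁,…,V_k be a partition of V into nonempty parts, and consider the auxiliary graph of the flow network construction of Theorem 4.1, with auxiliary vertices A₁,…,A_k. If x : E → ℝ≥0 satisfies x(δ⁺(v)) = x(δ⁻(v)) for all v and x(δ⁺(Vᵢ)) ≥ 1 for each part, then the vector y' defined by scaling the flow across each cut (Vᵢ, V∖Vᵢ) so that a 1/x(δ⁺(Vᵢ)) fraction is rerouted through Aᵢ is a nonnegative circulation with y'(δ⁺(Aᵢ)) = 1 and y'(δ⁺(v)) ≤ x(δ⁺(v)) for all v ∈ V. -/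
import Mathlib


/-- The vertex set of the auxiliary graph G': original vertices, a vertex
`out_e` and a vertex `in_e` for every potential edge `e`, and an auxiliary
vertex `A_i` for every part `i` of the partition. -/
abbrev AuxV (V : Type*) (k : ℕ) := (V ⊕ ((V × V) ⊕ (V × V))) ⊕ Fin k

/-- The rerouted circulation y' on the auxiliary graph, defined from a
fractional solution `x`, a partition `part : V → Fin k` and the cut values
`D i = x(δ⁺(V_i))`: a `1 / D i` fraction of the flow crossing the cut of part
`i` is rerouted through the auxiliary vertex `A_i`. All non-edges of the
auxiliary graph carry zero flow. -/
noncomputable def auxFlow {V : Type*} [DecidableEq V] {k : ℕ}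
    (part : V → Fin k) (x : V → V → ℝ) (D : Fin k → ℝ) :
    AuxV V k → AuxV V k → ℝ
  -- edge (u, out_e) for e = (a, b)
  | Sum.inl (Sum.inl u), Sum.inl (Sum.inr (Sum.inl (a, b))) =>
      if a = u then x a b * (1 - 1 / D (part a)) else 0
  -- edge (out_e, in_e)
  | Sum.inl (Sum.inr (Sum.inl (a, b))), Sum.inl (Sum.inr (Sum.inr (c, d))) =>
      if a = c ∧ b = d then
        (if part a = part b then x a b * (1 - 1 / D (part a)) else x a b)
      else 0
  -- edge (in_e, v) for e = (a, b)
  | Sum.inl (Sum.inr (Sum.inr (a, b))), Sum.inl (Sum.inl v) =>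
      if b = v then x a b * (1 - 1 / D (part b)) else 0
  -- edge (A_i, out_e) for e = (a, b) ∈ δ⁺(V_i)
  | Sum.inr i, Sum.inl (Sum.inr (Sum.inl (a, b))) =>
      if part a = i ∧ part b ≠ i then x a b / D i else 0
  -- edge (in_e, A_i) for e = (a, b) ∈ δ⁻(V_i)
  | Sum.inl (Sum.inr (Sum.inr (a, b))), Sum.inr i =>
      if part b = i ∧ part a ≠ i then x a b / D i else 0
  | _, _ => 0

theorem aux_circulation {V : Type*} [Fintype V] [DecidableEq V] (k : ℕ)
    (part : V → Fin k) (x : V → V → ℝ)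
    (hx0 : ∀ u v, 0 ≤ x u v)
    (hcons : ∀ v, ∑ u, x v u = ∑ u, x u v)
    (D : Fin k → ℝ)
    (hD : ∀ i, D i = ∑ u, ∑ v, if part u = i ∧ part v ≠ i then x u v else 0)
    (hD1 : ∀ i, 1 ≤ D i) :
    (∀ a b : AuxV V k, 0 ≤ auxFlow part x D a b) ∧
    (∀ a : AuxV V k,
        ∑ b, auxFlow part x D a b = ∑ b, auxFlow part x D b a) ∧
    (∀ i : Fin k, ∑ b, auxFlow part x D (Sum.inr i) b = 1) ∧
    (∀ v : V,
        ∑ b, auxFlow part x D (Sum.inl (Sum.inl v)) b ≤ ∑ u, x v u) := by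
  have hDpos : ∀ i, 0 < D i := fun i => lt_of_lt_of_le one_pos (hD1 i)
  have hDne : ∀ i, D i ≠ 0 := fun i => (hDpos i).ne'
  have hfac0 : ∀ i, 0 ≤ 1 - 1 / D i := by
    intro i
    have h : 1 / D i ≤ 1 := by rw [div_le_one (hDpos i)]; exact hD1 i
    linarith
  -- the sums at the various vertices
  have hout_v : ∀ v, ∑ b, auxFlow part x D (Sum.inl (Sum.inl v)) b
      = (∑ u, x v u) * (1 - 1 / D (part v)) := by
    intro v
    simp [Fintype.sum_sum_type, auxFlow, Fintype.sum_prod_type_right,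
      Finset.sum_ite_eq', Finset.mul_sum, Finset.sum_mul, mul_comm]
  have hin_v : ∀ v, ∑ b, auxFlow part x D b (Sum.inl (Sum.inl v))
      = (∑ u, x u v) * (1 - 1 / D (part v)) := by
    intro v
    simp [Fintype.sum_sum_type, auxFlow, Fintype.sum_prod_type,
      Finset.sum_ite_eq', Finset.mul_sum, Finset.sum_mul, mul_comm]
  have hout_oe : ∀ p q : V,
      ∑ b, auxFlow part x D (Sum.inl (Sum.inr (Sum.inl (p, q)))) b
        = (if part p = part q then x p q * (1 - 1 / D (part p)) else x p q) := by
    intro p q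
    simp [Fintype.sum_sum_type, auxFlow, Fintype.sum_prod_type, ite_and,
      Finset.sum_ite_eq, Finset.sum_ite_eq']
  have hin_oe : ∀ p q : V,
      ∑ b, auxFlow part x D b (Sum.inl (Sum.inr (Sum.inl (p, q))))
        = x p q * (1 - 1 / D (part p))
          + (if part q ≠ part p then x p q / D (part p) else 0) := by
    intro p q
    simp [Fintype.sum_sum_type, auxFlow, Fintype.sum_prod_type, ite_and,
      Finset.sum_ite_eq, Finset.sum_ite_eq']
  have hout_ie : ∀ p q : V,
      ∑ b, auxFlow part x D (Sum.inl (Sum.inr (Sum.inr (p, q)))) b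
        = x p q * (1 - 1 / D (part q))
          + (if part p ≠ part q then x p q / D (part q) else 0) := by
    intro p q
    simp [Fintype.sum_sum_type, auxFlow, Fintype.sum_prod_type, ite_and,
      Finset.sum_ite_eq, Finset.sum_ite_eq']
  have hin_ie : ∀ p q : V,
      ∑ b, auxFlow part x D b (Sum.inl (Sum.inr (Sum.inr (p, q))))
        = (if part p = part q then x p q * (1 - 1 / D (part p)) else x p q) := by
    intro p q
    simp [Fintype.sum_sum_type, auxFlow, Fintype.sum_prod_type, ite_and,
      Finset.sum_ite_eq, Finset.sum_ite_eq']
  have hout_A : ∀ i : Fin k, ∑ b, auxFlow part x D (Sum.inr i) b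
      = (∑ a, ∑ b, if part a = i ∧ part b ≠ i then x a b else 0) / D i := by
    intro i
    simp [Fintype.sum_sum_type, auxFlow, Fintype.sum_prod_type,
      Finset.sum_div, ite_div, zero_div]
  have hin_A : ∀ i : Fin k, ∑ b, auxFlow part x D b (Sum.inr i)
      = (∑ a, ∑ b, if part b = i ∧ part a ≠ i then x a b else 0) / D i := by
    intro i
    simp [Fintype.sum_sum_type, auxFlow, Fintype.sum_prod_type,
      Finset.sum_div, ite_div, zero_div]
  -- the incoming cut value equals the outgoing one
  have hkey : ∀ i : Fin k,
      (∑ a, ∑ b, if part b = i ∧ part a ≠ i then x a b else 0) = D i := by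
    intro i
    rw [hD i]
    have h1 : ∀ a b : V, (if part a = i ∧ part b ≠ i then x a b else 0)
        = (if part a = i then x a b else 0)
          - (if part a = i ∧ part b = i then x a b else 0) := by
      intro a b; by_cases h1 : part a = i <;> by_cases h2 : part b = i <;> simp [h1, h2]
    have h2 : ∀ a b : V, (if part b = i ∧ part a ≠ i then x a b else 0)
        = (if part b = i then x a b else 0)
          - (if part a = i ∧ part b = i then x a b else 0) := by
      intro a b; by_cases h1 : part a = i <;> by_cases h2 : part b = i <;> simp [h1, h2]
    simp only [h1, h2, Finset.sum_sub_distrib]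
    congr 1
    rw [Finset.sum_comm]
    refine Finset.sum_congr rfl fun v _ => ?_
    by_cases h : part v = i
    · simp only [h, if_true]; exact (hcons v).symm
    · simp [h]
  have hAone : ∀ i : Fin k, ∑ b, auxFlow part x D (Sum.inr i) b = 1 := by
    intro i
    rw [hout_A i, ← hD i, div_self (hDne i)]
  refine ⟨?_, ?_, hAone, ?_⟩
  · -- nonnegativity
    rintro ((u | (⟨a, b⟩ | ⟨a, b⟩)) | i) ((v | (⟨c, d⟩ | ⟨c, d⟩)) | j) <;>
      simp only [auxFlow] <;>
      first
        | exact le_refl 0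
        | (split_ifs <;>
            first
              | exact le_refl 0
              | exact mul_nonneg (hx0 _ _) (hfac0 _)
              | exact div_nonneg (hx0 _ _) (hDpos _).le
              | exact hx0 _ _)
  · -- conservation
    rintro ((v | (⟨p, q⟩ | ⟨p, q⟩)) | i)
    · rw [hout_v, hin_v, hcons v]
    · rw [hout_oe, hin_oe]
      by_cases h : part p = part q
      · rw [if_pos h, if_neg (not_not_intro h.symm), add_zero]
      · rw [if_neg h, if_pos (Ne.symm h)]
        ring
    · rw [hout_ie, hin_ie]
      by_cases h : part p = part q
      · rw [if_pos h, if_neg (not_not_intro h), add_zero, h]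
      · rw [if_neg h, if_pos h]
        ring
    · rw [hAone i, hin_A i, hkey i, div_self (hDne i)]
  · -- bound
    intro v
    rw [hout_v v]
    have hS : 0 ≤ ∑ u, x v u := Finset.sum_nonneg fun u _ => hx0 v u
    have h1 : 1 - 1 / D (part v) ≤ 1 := by
      have : 0 ≤ 1 / D (part v) := div_nonneg zero_le_one (hDpos _).le
      linarith
    calc (∑ u, x v u) * (1 - 1 / D (part v)) ≤ (∑ u, x v u) * 1 :=
          mul_le_mul_of_nonneg_left h1 hS
      _ = ∑ u, x v u := mul_one _
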